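/- For any sequence of positive integers a_1,...,a_d with a_1 ≥ 2, K(a_d,...,a_2,a_1-1,1,a_1-1,a_2,...,a_d) = K(a_1,...,a_d)² - K(a_2,...,a_d)². -/
import Mathlib


def contK : List ℕ → ℕ
  | [] => 1
  | [a] => a
  | a :: b :: l => a * contK (b :: l) + contK l

def contKp : List ℕ → ℕ
  | [] => 0
  | _ :: l => contK l

def contKt : List ℕ → ℕ
  | [] => 0
  | a :: l => contK ((a :: l).dropLast)

lemma contKt_eq (l : List ℕ) (h : l ≠ []) : contKt l = contK l.dropLast := by
  cases l with
  | nil => exact absurd rfl h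
  | cons a l => rfl

lemma contK_cons (a : ℕ) (l : List ℕ) : contK (a :: l) = a * contK l + contKp l := by
  cases l <;> simp [contK, contKp]

lemma contKt_cons_cons (a b : ℕ) (l : List ℕ) :
    contKt (a :: b :: l) = a * contKt (b :: l) + contKt l := by
  cases l with
  | nil => simp [contKt, contK]
  | cons c l' => simp [contKt, List.dropLast, contK]

lemma contK_append (l m : List ℕ) :
    contK (l ++ m) = contK l * contK m + contKt l * contKp m := by
  induction l using contK.induct with
  | case1 => simp [contK, contKt]
  | case2 a => simpa [contK, contKt] using contK_cons a m
  | case3 a b l ih1 ih2 =>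
      simp only [List.cons_append] at *
      rw [show contK (a :: b :: (l ++ m)) = a * contK (b :: (l ++ m)) + contK (l ++ m) from rfl,
          ih1, ih2, contKt_cons_cons,
          show contK (a :: b :: l) = a * contK (b :: l) + contK l from rfl]
      ring

lemma contK_reverse (l : List ℕ) : contK l.reverse = contK l := by
  induction l using contK.induct with
  | case1 => rfl
  | case2 a => rfl
  | case3 a b l ih1 ih2 =>
      rw [show (a :: b :: l).reverse = (b :: l).reverse ++ [a] by simp, contK_append]
      have hrt : contKt ((b :: l).reverse) = contK l := by
        rw [show (b :: l).reverse = l.reverse ++ [b] by simp,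
            contKt_eq _ (by simp), List.dropLast_concat, ih2]
      rw [hrt, ih1]
      show contK (b :: l) * a + contK l * contK [] = _
      rw [show contK (a :: b :: l) = a * contK (b :: l) + contK l from rfl]
      simp [contK]; ring

theorem continuant_palindrome_diff_of_squares (a₁ : ℕ) (ha₁ : 2 ≤ a₁) (t : List ℕ)
    (ht : ∀ x ∈ t, 0 < x) :
    contK (t.reverse ++ (a₁ - 1) :: 1 :: (a₁ - 1) :: t) =
      contK (a₁ :: t) ^ 2 - contK t ^ 2 := by
  obtain ⟨e, rfl⟩ : ∃ e, a₁ = e + 2 := ⟨a₁ - 2, by omega⟩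
  have hsub : e + 2 - 1 = e + 1 := rfl
  cases t with
  | nil =>
      simp only [List.reverse_nil, List.nil_append, hsub]
      show contK [e+1, 1, e+1] = contK [e+2] ^ 2 - contK [] ^ 2
      show (e+1) * (1 * (e+1) + contK []) + contK [e+1] = (e+2)^2 - 1^2
      show (e+1) * (1 * (e+1) + 1) + (e+1) = (e+2)^2 - 1^2
      have : (e+2)^2 = 1^2 + ((e+1) * (1 * (e+1) + 1) + (e+1)) := by ring
      rw [this, Nat.add_sub_cancel_left]
  | cons c s =>
      set B := contK (c :: s) with hB
      set C := contK s with hC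
      set D := (e+1) * B + C with hD
      have hBs : contK ((e+1) :: c :: s) = D := rfl
      have h1 : contK (1 :: (e+1) :: c :: s) = D + B := by
        show 1 * contK ((e+1) :: c :: s) + contK (c :: s) = D + B
        rw [hBs]; ring
      have hM : contK ((e+1) :: 1 :: (e+1) :: c :: s) = (e+1) * (D + B) + D := by
        show (e+1) * contK (1 :: (e+1) :: c :: s) + contK ((e+1) :: c :: s) = _
        rw [h1, hBs]
      have hA : contK ((e+2) :: c :: s) = (e+2) * B + C := rfl
      rw [hsub, contK_append, contK_reverse, hA, hM]
      have hrt : contKt ((c :: s).reverse) = C := by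
        rcases s with _ | ⟨d, s'⟩
        · rfl
        · rw [show (c :: d :: s').reverse = (d :: s').reverse ++ [c] by simp,
              contKt_eq _ (by simp), List.dropLast_concat, contK_reverse]
      have hp : contKp ((e+1) :: 1 :: (e+1) :: c :: s) = D + B := h1
      rw [hrt, hp, ← hB]
      have key : ((e+2) * B + C)^2 = B^2 + D * (((e+2) * B + C) + B) := by
        rw [hD]; ring
      rw [key, Nat.add_sub_cancel_left, hD]
      ring
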